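/- Let n ≥ 3, m ≥ 1 and N = nm−m+1. The set V is a connected component of μ_m(Γ(D_N,1)): if x ∈ V and there is an arrow in μ_m(Γ(D_N,1)) between x and a vertex y (in either direction), then y ∈ V; and the full subquiver of μ_m(Γ(D_N,1)) induced by V is connected (any two vertices of V are joined by a finite sequence of vertices of V with consecutive vertices joined by an arrow in some direction). -/
import Mathlib


/-!
Common combinatorial definitions for the translation quivers of
Baur–Marsh, "A geometric description of the m-cluster categories of type Dₙ".

* `DLab` is the type of second coordinates of vertices of a type-`D` translation
  quiver: `DLab.z false` is the label `0`, `DLab.z true` is the label `0̄`, and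
  `DLab.pos j` is the (unbarred) label `j ≥ 1`.
* `DVertex N h` is the vertex set `ℤ/N × {0, 0̄, 1, …, h−2}`.
* `DArrow N h` is the arrow relation of the translation quiver with `N` columns
  and labels `0, 0̄, 1, …, h−2`.
* `DTau N c` is the translation: `(i,j) ↦ (i−1, j̄)` when `i = 0`, `j ∈ {0,0̄}` and
  `c` is odd, and `(i,j) ↦ (i−1,j)` otherwise.

With these conventions, `Γ(D_N, 1)` is `(DVertex N N, DArrow N N, DTau N N)`
and `Γ(D_n, m)` is
`(DVertex (n*m−m+1) n, DArrow (n*m−m+1) n, DTau (n*m−m+1) (n*m))`.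
-/

/-- Labels `0` (= `z false`), `0̄` (= `z true`) and `j ≥ 1` (= `pos j`). -/
inductive DLab : Type
  | z : Bool → DLab
  | pos : ℕ → DLab
deriving DecidableEq

/-- The bar operation on labels: swaps `0` and `0̄`, fixes all other labels. -/
def DLab.bar : DLab → DLab
  | .z b => .z (!b)
  | .pos j => .pos j

/-- The vertex set `ℤ/N × {0, 0̄, 1, …, h−2}`. -/
def DVertex (N h : ℕ) : Set (ZMod N × DLab) :=
  {v | ∀ j : ℕ, v.2 = DLab.pos j → 1 ≤ j ∧ j ≤ h - 2}

/-- The arrows `(i,j) → (i,j−1)` and `(i,j−1) → (i+1,j)` for `1 ≤ j ≤ h−2`,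
together with `(i,1) → (i,0̄)` and `(i,0̄) → (i+1,1)`. -/
inductive DArrow (N h : ℕ) : ZMod N × DLab → ZMod N × DLab → Prop
  | down (i : ZMod N) (j : ℕ) (h1 : 2 ≤ j) (h2 : j ≤ h - 2) :
      DArrow N h (i, DLab.pos j) (i, DLab.pos (j - 1))
  | toZ (i : ZMod N) (b : Bool) :
      DArrow N h (i, DLab.pos 1) (i, DLab.z b)
  | fromZ (i : ZMod N) (b : Bool) :
      DArrow N h (i, DLab.z b) (i + 1, DLab.pos 1)
  | up (i : ZMod N) (j : ℕ) (h1 : 1 ≤ j) (h2 : j + 1 ≤ h - 2) :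
      DArrow N h (i, DLab.pos j) (i + 1, DLab.pos (j + 1))

/-- The translation `τ(i,j) = (i−1, j̄)` if `i = 0`, `j ∈ {0,0̄}` and `c` is odd,
and `τ(i,j) = (i−1, j)` otherwise.  For `Γ(D_N,1)` one takes `c = N`; for
`Γ(D_n,m)` one takes `c = n*m` (and `N = n*m−m+1`). -/
def DTau (N c : ℕ) : ZMod N × DLab → ZMod N × DLab := fun v =>
  match v with
  | (i, DLab.z b) =>
      if i = 0 ∧ c % 2 = 1 then (i - 1, DLab.z (!b)) else (i - 1, DLab.z b)
  | (i, DLab.pos j) => (i - 1, DLab.pos j)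

/-- `p 0 → p 1 → ⋯ → p m` is a path in `Γ(D_N,1)`. -/
def IsPath (N m : ℕ) (p : ℕ → ZMod N × DLab) : Prop :=
  ∀ k, k < m → DArrow N N (p k) (p (k + 1))

/-- `p 0 → p 1 → ⋯ → p m` is a sectional path in `Γ(D_N,1)`:
`τ (p (k+1)) ≠ p (k−1)` for `1 ≤ k ≤ m − 1`. -/
def IsSectional (N m : ℕ) (p : ℕ → ZMod N × DLab) : Prop :=
  IsPath N m p ∧ ∀ k, 1 ≤ k → k + 1 ≤ m → DTau N N (p (k + 1)) ≠ p (k - 1)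

/-- The extra condition defining restricted paths: there is no `1 ≤ k ≤ m−1`
such that for some `r`, `p (k+1) = (r, 0)` and `p (k−1) = (r−1, 0̄)`, or
`p (k+1) = (r, 0̄)` and `p (k−1) = (r−1, 0)`. -/
def NoForbidden (N m : ℕ) (p : ℕ → ZMod N × DLab) : Prop :=
  ¬ ∃ k, 1 ≤ k ∧ k + 1 ≤ m ∧ ∃ r : ZMod N,
      ((p (k + 1) = (r, DLab.z false) ∧ p (k - 1) = (r - 1, DLab.z true)) ∨
       (p (k + 1) = (r, DLab.z true) ∧ p (k - 1) = (r - 1, DLab.z false)))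

/-- `p 0 → p 1 → ⋯ → p m` is a restricted sectional path in `Γ(D_N,1)`. -/
def IsRestricted (N m : ℕ) (p : ℕ → ZMod N × DLab) : Prop :=
  IsSectional N m p ∧ NoForbidden N m p

/-- There is a restricted sectional path of length `m` from `x` to `y` in
`Γ(D_N,1)`; these are exactly the arrows `x → y` of the restricted `m`-th power
`μ_m(Γ(D_N,1))`. -/
def RSPath (N m : ℕ) (x y : ZMod N × DLab) : Prop :=
  ∃ p : ℕ → ZMod N × DLab, IsRestricted N m p ∧ p 0 = x ∧ p m = y

/-- The set `V = {(r,s) : s ∈ {0,0̄} or m ∣ s}` inside the vertex set of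
`Γ(D_N,1)`. -/
def VSet (N m : ℕ) : Set (ZMod N × DLab) :=
  {v | v ∈ DVertex N N ∧ ∀ j : ℕ, v.2 = DLab.pos j → m ∣ j}

/-- The map `σ'` from the vertex set of `Γ(D_n,m)` to the vertex set of
`Γ(D_N,1)`, where `N = n*m−m+1`:  `σ'(i,j) = (i*m, j*m)` if `j ∉ {0,0̄}`, or if
`j ∈ {0,0̄}`, `m` is odd and `n` is even; otherwise, with `i.val` the standard
representative of `i`, `σ'(i,j) = (i*m, j*m)` if `⌊i*m/N⌋` is even and
`σ'(i,j) = (i*m, (j̄)*m)` if `⌊i*m/N⌋` is odd (with the conventions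
`0*m = 0` and `0̄*m = 0̄`). -/
def DSigma (n m : ℕ) : ZMod (n * m - m + 1) × DLab → ZMod (n * m - m + 1) × DLab :=
  fun v =>
    match v with
    | (i, DLab.pos j) => (i * (m : ZMod (n * m - m + 1)), DLab.pos (j * m))
    | (i, DLab.z b) =>
        if m % 2 = 1 ∧ n % 2 = 0 then
          (i * (m : ZMod (n * m - m + 1)), DLab.z b)
        else if (i.val * m) / (n * m - m + 1) % 2 = 0 then
          (i * (m : ZMod (n * m - m + 1)), DLab.z b)
        else
          (i * (m : ZMod (n * m - m + 1)), DLab.z (!b))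

/-- `C` is a connected component of the quiver with arrow relation `A`:
it is nonempty, closed under arrows in both directions, and any two of its
vertices are connected by an unoriented path. -/
def IsConnComponent {α : Type*} (A : α → α → Prop) (C : Set α) : Prop :=
  C.Nonempty ∧ (∀ x ∈ C, ∀ y, (A x y ∨ A y x) → y ∈ C) ∧
    ∀ x ∈ C, ∀ y ∈ C, Relation.ReflTransGen (fun a b => A a b ∨ A b a) x y

/-- The set `X_k = {(i, j) : j ∈ {k, m+k, …, (n−2)m+k}}`. -/
def XSet (N n m k : ℕ) : Set (ZMod N × DLab) :=
  {v | ∃ (i : ZMod N) (l : ℕ), l ≤ n - 2 ∧ v = (i, DLab.pos (l * m + k))}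

/-- Vertex set `ℤ/N × {1, …, h}` of the translation quiver `Γ(A_h, N)`
(the Auslander–Reiten quiver of `D^b(A_h)/τ^N`). -/
def AVertex (N h : ℕ) : Set (ZMod N × ℕ) :=
  {v | 1 ≤ v.2 ∧ v.2 ≤ h}

/-- Arrows of `Γ(A_h, N)`: `(i,j) → (i,j−1)` for `2 ≤ j ≤ h` and
`(i,j) → (i+1,j+1)` for `1 ≤ j ≤ h−1`. -/
inductive AArrow (N h : ℕ) : ZMod N × ℕ → ZMod N × ℕ → Prop
  | down (i : ZMod N) (j : ℕ) (h1 : 2 ≤ j) (h2 : j ≤ h) :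
      AArrow N h (i, j) (i, j - 1)
  | up (i : ZMod N) (j : ℕ) (h1 : 1 ≤ j) (h2 : j + 1 ≤ h) :
      AArrow N h (i, j) (i + 1, j + 1)

/-- Translation of `Γ(A_h, N)`: `(i,j) ↦ (i−1, j)`. -/
def ATau (N : ℕ) (v : ZMod N × ℕ) : ZMod N × ℕ := (v.1 - 1, v.2)

/-- Tagged arcs in the punctured `N`-gon: `TArc.arc i k` is the arc
`D_{i, i+1+k*m}` (for `1 ≤ k ≤ n−2`), and `TArc.tag i b` is the tagged arc
`D_{ii}^+` (for `b = false`) or `D_{ii}^-` (for `b = true`). -/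
inductive TArc (N : ℕ) : Type
  | arc : ZMod N → ℕ → TArc N
  | tag : ZMod N → Bool → TArc N

/-- The set of tagged `m`-arcs: arcs `D_{i,i+1+k*m}` with `1 ≤ k ≤ n−2`
together with all tagged arcs `D_{ii}^±`. -/
def TArcSet (N n : ℕ) : Set (TArc N) :=
  {a | ∀ (i : ZMod N) (k : ℕ), a = TArc.arc i k → 1 ≤ k ∧ k ≤ n - 2}

/-- The `m`-moves between tagged `m`-arcs, i.e. the arrows of `Γ_⊙(n,m)`:
`D_{i,i+1+km} → D_{i,i+1+(k+1)m}` for `1 ≤ k ≤ n−3`;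
`D_{i,i+1+km} → D_{i+m,i+1+km} = D_{i+m,(i+m)+1+(k−1)m}` for `2 ≤ k ≤ n−2`;
`D_{i,i+1+(n−2)m} → D_{ii}^±`; and
`D_{ii}^± → D_{i+m,i} = D_{i+m,(i+m)+1+(n−2)m}`. -/
inductive MMove (N n m : ℕ) : TArc N → TArc N → Prop
  | extend (i : ZMod N) (k : ℕ) (h1 : 1 ≤ k) (h2 : k ≤ n - 3) :
      MMove N n m (TArc.arc i k) (TArc.arc i (k + 1))
  | rotate (i : ZMod N) (k : ℕ) (h1 : 2 ≤ k) (h2 : k ≤ n - 2) :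
      MMove N n m (TArc.arc i k) (TArc.arc (i + (m : ZMod N)) (k - 1))
  | toTag (i : ZMod N) (b : Bool) :
      MMove N n m (TArc.arc i (n - 2)) (TArc.tag i b)
  | fromTag (i : ZMod N) (b : Bool) :
      MMove N n m (TArc.tag i b) (TArc.arc (i + (m : ZMod N)) (n - 2))

/-- The map `τ_m` on tagged `m`-arcs: `D_{i,i+1+km} ↦ D_{i−m,(i−m)+1+km}` and
`D_{ii}^± ↦ D_{i−m,i−m}^±` if `m` is even, `D_{ii}^± ↦ D_{i−m,i−m}^∓` if `m`
is odd. -/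
def TauArc (N m : ℕ) : TArc N → TArc N
  | .arc i k => .arc (i - (m : ZMod N)) k
  | .tag i b => .tag (i - (m : ZMod N)) (if m % 2 = 1 then !b else b)

namespace VCC

/-- The level of a label: `z _ ↦ 0`, `pos j ↦ j`. -/
def lev : DLab → ℤ
  | .z _ => 0
  | .pos j => j

lemma dtau_pos {N c : ℕ} (i : ZMod N) (j : ℕ) :
    DTau N c (i, DLab.pos j) = (i - 1, DLab.pos j) := rfl

lemma dtau_z {N c : ℕ} (i : ZMod N) (b : Bool) :
    ∃ b', DTau N c (i, DLab.z b) = (i - 1, DLab.z b') := by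
  by_cases h : i = 0 ∧ c % 2 = 1
  · exact ⟨!b, by simp [DTau, h]⟩
  · exact ⟨b, by simp [DTau, h]⟩

lemma darrow_cases {N h : ℕ} {a b : ZMod N × DLab} (hab : DArrow N h a b) :
    (∃ i j, 2 ≤ j ∧ j ≤ h - 2 ∧ a = (i, DLab.pos j) ∧ b = (i, DLab.pos (j - 1))) ∨
    (∃ i c, a = (i, DLab.pos 1) ∧ b = (i, DLab.z c)) ∨
    (∃ i c, a = (i, DLab.z c) ∧ b = (i + 1, DLab.pos 1)) ∨
    (∃ i j, 1 ≤ j ∧ j + 1 ≤ h - 2 ∧ a = (i, DLab.pos j) ∧ b = (i + 1, DLab.pos (j + 1))) := by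
  cases hab with
  | down i j h1 h2 => exact Or.inl ⟨i, j, h1, h2, rfl, rfl⟩
  | toZ i c => exact Or.inr (Or.inl ⟨i, c, rfl, rfl⟩)
  | fromZ i c => exact Or.inr (Or.inr (Or.inl ⟨i, c, rfl, rfl⟩))
  | up i j h1 h2 => exact Or.inr (Or.inr (Or.inr ⟨i, j, h1, h2, rfl, rfl⟩))

lemma lev_step {N : ℕ} {a b : ZMod N × DLab} (h : DArrow N N a b) :
    lev b.2 = lev a.2 - 1 ∨ lev b.2 = lev a.2 + 1 := by
  cases h with
  | down i j h1 h2 =>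
      left; simp only [lev]
      have : (1:ℕ) ≤ j := by omega
      push_cast [Nat.cast_sub this]; ring
  | toZ i b => left; simp [lev]
  | fromZ i b => right; simp [lev]
  | up i j h1 h2 => right; simp only [lev]; push_cast; ring

lemma into_z {N : ℕ} {a b : ZMod N × DLab} (h : DArrow N N a b) {c : Bool}
    (hb : b.2 = DLab.z c) : a = (b.1, DLab.pos 1) := by
  cases h <;> simp_all

lemma from_z {N : ℕ} {a b : ZMod N × DLab} (h : DArrow N N a b) {c : Bool}
    (ha : a.2 = DLab.z c) : b = (a.1 + 1, DLab.pos 1) := by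
  cases h <;> simp_all

/-- No "down-then-up" in a sectional path. -/
lemma lemA {N : ℕ} {a b c : ZMod N × DLab} (h1 : DArrow N N a b)
    (h2 : DArrow N N b c) (hd : lev b.2 < lev a.2) (hu : lev b.2 < lev c.2) :
    DTau N N c = a := by
  rcases darrow_cases h1 with ⟨i, j, hj1, hj2, ha, hb⟩ | ⟨i, c0, ha, hb⟩ |
      ⟨i, c0, ha, hb⟩ | ⟨i, j, hj1, hj2, ha, hb⟩ <;>
    rcases darrow_cases h2 with ⟨i', j', hj1', hj2', hb', hc⟩ | ⟨i', c0', hb', hc⟩ |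
      ⟨i', c0', hb', hc⟩ | ⟨i', j', hj1', hj2', hb', hc⟩ <;>
    subst ha hb hc <;>
    injection hb' with hi hj <;>
    subst hi
  all_goals first
    | exact DLab.noConfusion hj
    | (injection hj with hjj
       try subst hjj
       first
        | (exfalso; simp only [lev] at hu hd; omega)
        | (exfalso; omega)
        | (rw [dtau_pos, add_sub_cancel_right]
           try rw [show j - 1 + 1 = j from by omega]))

/-- "up-then-down" forces either a sectional violation or the
`z → pos 1 → z` dip. -/
lemma lemB {N : ℕ} {a b c : ZMod N × DLab} (h1 : DArrow N N a b)
    (h2 : DArrow N N b c) (hu : lev a.2 < lev b.2) (hd : lev c.2 < lev b.2) :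
    DTau N N c = a ∨
      ∃ (r : ZMod N) (b0 b1 : Bool),
        a = (r, DLab.z b0) ∧ b = (r + 1, DLab.pos 1) ∧ c = (r + 1, DLab.z b1) := by
  rcases darrow_cases h1 with ⟨i, j, hj1, hj2, ha, hb⟩ | ⟨i, c0, ha, hb⟩ |
      ⟨i, c0, ha, hb⟩ | ⟨i, j, hj1, hj2, ha, hb⟩ <;>
    rcases darrow_cases h2 with ⟨i', j', hj1', hj2', hb', hc⟩ | ⟨i', c0', hb', hc⟩ |
      ⟨i', c0', hb', hc⟩ | ⟨i', j', hj1', hj2', hb', hc⟩ <;>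
    subst ha hb hc <;>
    injection hb' with hi hj <;>
    subst hi
  all_goals first
    | exact DLab.noConfusion hj
    | (injection hj with hjj
       try subst hjj
       first
        | (exfalso; simp only [lev] at hu hd; omega)
        | (exfalso; omega)
        | (exact Or.inr ⟨_, _, _, rfl, rfl, rfl⟩)
        | (refine Or.inl ?_
           rw [dtau_pos, add_sub_cancel_right]
           try rw [show j + 1 - 1 = j from by omega]))

/-- Classification of restricted sectional paths of length `m ≥ 1`:
all steps down, all steps up, or the `m = 2` dip with both endpoints on the
`z` level. -/
lemma classify {N m : ℕ} {p : ℕ → ZMod N × DLab} (hm : 1 ≤ m)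
    (hp : IsRestricted N m p) :
    (∀ k ≤ m, lev (p k).2 = lev (p 0).2 - k) ∨
    (∀ k ≤ m, lev (p k).2 = lev (p 0).2 + k) ∨
    (m = 2 ∧ (∃ b, (p 0).2 = DLab.z b) ∧ (∃ b, (p 2).2 = DLab.z b)) := by
  classical
  obtain ⟨⟨hpath, hsec⟩, hres⟩ := hp
  have h0 := lev_step (hpath 0 (by omega))
  rcases h0 with h0 | h0
  · -- first step down : all steps down
    left
    have alldown : ∀ k, k < m → lev (p (k + 1)).2 = lev (p k).2 - 1 := by
      intro k
      induction k with
      | zero => intro _; simpa using h0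
      | succ k ih =>
          intro hk
          have hprev := ih (by omega)
          rcases lev_step (hpath (k + 1) hk) with h | h
          · exact h
          · exfalso
            have hT := lemA (hpath k (by omega)) (hpath (k + 1) hk)
              (by omega) (by omega)
            exact hsec (k + 1) (by omega) (by omega) (by simpa using hT)
    intro k hk
    induction k with
    | zero => simp
    | succ k ih =>
        have := alldown k (by omega)
        have h2 := ih (by omega)
        push_cast
        omega
  · -- first step up
    by_cases hall : ∀ k, k < m → lev (p (k + 1)).2 = lev (p k).2 + 1
    · right; left
      intro k hk
      induction k with
      | zero => simp
      | succ k ih =>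
          have := hall k (by omega)
          have h2 := ih (by omega)
          push_cast
          omega
    · right; right
      push_neg at hall
      have hex : ∃ k, k < m ∧ ¬ lev (p (k + 1)).2 = lev (p k).2 + 1 := hall
      set Q : ℕ → Prop := fun k => k < m ∧ ¬ lev (p (k + 1)).2 = lev (p k).2 + 1
        with hQ
    -- minimal bad index
      have hexQ : ∃ k, Q k := hex
      obtain ⟨k, hQk, hmin⟩ : ∃ k, Q k ∧ ∀ j, j < k → ¬ Q j :=
        ⟨Nat.find hexQ, Nat.find_spec hexQ, fun j hj => Nat.find_min hexQ hj⟩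
      obtain ⟨hk, hknot⟩ := hQk
      -- steps before k are up
      have hupbefore : ∀ j, j < k → lev (p (j + 1)).2 = lev (p j).2 + 1 := by
        intro j hj
        by_contra hc
        exact (hmin j hj) ⟨by omega, hc⟩
      have hk1 : 1 ≤ k := by
        rcases Nat.eq_zero_or_pos k with rfl | h
        · exact absurd (by simpa using h0) hknot
        · exact h
      have hdownk : lev (p (k + 1)).2 = lev (p k).2 - 1 := by
        rcases lev_step (hpath k hk) with h | h
        · exact h
        · exact absurd h hknot
      have hupk : lev (p k).2 = lev (p (k - 1)).2 + 1 := by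
        have := hupbefore (k - 1) (by omega)
        have e : k - 1 + 1 = k := by omega
        rwa [e] at this
      have harr1 : DArrow N N (p (k - 1)) (p k) := by
        have := hpath (k - 1) (by omega)
        have e : k - 1 + 1 = k := by omega
        rwa [e] at this
      rcases lemB harr1 (hpath k hk) (by omega) (by omega) with hT | hstruct
      · exact absurd hT (hsec k (by omega) (by omega))
      obtain ⟨r, b0, b1, ha, hb, hc⟩ := hstruct
      -- k = 1
      have hkeq : k = 1 := by
        by_contra hne
        have hk2 : 2 ≤ k := by omega
        have harr0 : DArrow N N (p (k - 2)) (p (k - 1)) := by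
          have := hpath (k - 2) (by omega)
          have e : k - 2 + 1 = k - 1 := by omega
          rwa [e] at this
        have hpk2 : p (k - 2) = ((p (k - 1)).1, DLab.pos 1) :=
          into_z harr0 (by rw [ha])
        have hup2 := hupbefore (k - 2) (by omega)
        have e : k - 2 + 1 = k - 1 := by omega
        rw [e] at hup2
        rw [ha] at hup2
        rw [hpk2] at hup2
        simp [lev] at hup2
      subst hkeq
      -- m = 2
      have hmeq : m = 2 := by
        by_contra hne
        have hm3 : 3 ≤ m := by omega
        have harr3 : DArrow N N (p 2) (p 3) := hpath 2 (by omega)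
        have hp3 : p 3 = ((p 2).1 + 1, DLab.pos 1) := from_z harr3 (by rw [hc])
        have hT := lemA (hpath 1 (by omega)) harr3
          (by rw [hb, hc]; simp [lev]) (by rw [hc, hp3]; simp [lev])
        exact hsec 2 (by omega) (by omega) (by simpa using hT)
      refine ⟨hmeq, ⟨b0, by simp at ha ⊢; rw [ha]⟩, ⟨b1, by rw [hc]⟩⟩

lemma arrow_mem {N : ℕ} (hN : 3 ≤ N) {a b : ZMod N × DLab} (h : DArrow N N a b) :
    a ∈ DVertex N N ∧ b ∈ DVertex N N := by
  cases h with
  | down i j h1 h2 =>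
      constructor <;> intro j' hj' <;> simp_all <;> omega
  | toZ i b =>
      constructor <;> intro j' hj' <;> simp_all <;> omega
  | fromZ i b =>
      constructor <;> intro j' hj' <;> simp_all <;> omega
  | up i j h1 h2 =>
      constructor <;> intro j' hj' <;> simp_all <;> omega

lemma dvd_of_mem {N m : ℕ} {v : ZMod N × DLab} (hv : v ∈ VSet N m) :
    (m : ℤ) ∣ lev v.2 := by
  obtain ⟨i, l⟩ := v
  cases l with
  | z b => simp [lev]
  | pos j =>
      have := hv.2 j rfl
      simpa [lev] using Int.natCast_dvd_natCast.mpr this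

lemma closure_fwd {m N : ℕ} (hm : 1 ≤ m) (hN3 : 3 ≤ N)
    {x y : ZMod N × DLab} (hx : x ∈ VSet N m) (h : RSPath N m x y) :
    y ∈ VSet N m := by
  obtain ⟨p, hp, h0, hmm⟩ := h
  have harr : DArrow N N (p (m - 1)) (p m) := by
    have := hp.1.1 (m - 1) (by omega)
    have e : m - 1 + 1 = m := by omega
    rwa [e] at this
  have hyD : y ∈ DVertex N N := hmm ▸ (arrow_mem hN3 harr).2
  have hdx : (m : ℤ) ∣ lev x.2 := dvd_of_mem hx
  refine ⟨hyD, fun j hj => ?_⟩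
  have hdy : (m : ℤ) ∣ lev y.2 := by
    rcases classify hm hp with hc | hc | hc
    · have := hc m le_rfl
      rw [h0, hmm] at this
      rw [this]
      exact dvd_sub hdx dvd_rfl
    · have := hc m le_rfl
      rw [h0, hmm] at this
      rw [this]
      exact dvd_add hdx dvd_rfl
    · obtain ⟨hm2, _, ⟨b, hb⟩⟩ := hc
      rw [← hm2, hmm, hj] at hb
      exact absurd hb (by simp)
  rw [hj] at hdy
  exact_mod_cast Int.natCast_dvd_natCast.mp (by simpa [lev] using hdy)

lemma closure_bwd {m N : ℕ} (hm : 1 ≤ m) (hN3 : 3 ≤ N)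
    {x y : ZMod N × DLab} (hx : x ∈ VSet N m) (h : RSPath N m y x) :
    y ∈ VSet N m := by
  obtain ⟨p, hp, h0, hmm⟩ := h
  have harr : DArrow N N (p 0) (p 1) := hp.1.1 0 (by omega)
  have hyD : y ∈ DVertex N N := h0 ▸ (arrow_mem hN3 harr).1
  have hdx : (m : ℤ) ∣ lev x.2 := dvd_of_mem hx
  refine ⟨hyD, fun j hj => ?_⟩
  have hdy : (m : ℤ) ∣ lev y.2 := by
    rcases classify hm hp with hc | hc | hc
    · have := hc m le_rfl
      rw [h0, hmm] at this
      have : lev y.2 = lev x.2 + m := by omega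
      rw [this]
      exact dvd_add hdx dvd_rfl
    · have := hc m le_rfl
      rw [h0, hmm] at this
      have : lev y.2 = lev x.2 - m := by omega
      rw [this]
      exact dvd_sub hdx dvd_rfl
    · obtain ⟨hm2, ⟨b, hb⟩, _⟩ := hc
      rw [h0, hj] at hb
      exact absurd hb (by simp)
  rw [hj] at hdy
  exact_mod_cast Int.natCast_dvd_natCast.mp (by simpa [lev] using hdy)

lemma rs_up {N m : ℕ} (hm : 1 ≤ m) (hmN : m + 2 ≤ N) (i : ZMod N) (b : Bool) :
    RSPath N m (i, DLab.z b) (i + ((m : ℕ) : ZMod N), DLab.pos m) := by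
  refine ⟨fun k => if k = 0 then (i, DLab.z b) else (i + ((k : ℕ) : ZMod N), DLab.pos k),
    ⟨⟨?_, ?_⟩, ?_⟩, by simp, by simp only [if_neg (by omega : ¬ m = 0)]⟩
  · intro k hk
    by_cases hk0 : k = 0
    · subst hk0
      simpa using DArrow.fromZ i b
    · have h1 : ¬ (k + 1 = 0) := by omega
      simp only [if_neg hk0, if_neg h1]
      have harr := DArrow.up (N := N) (h := N) (i + ((k : ℕ) : ZMod N)) k (by omega) (by omega)
      have e : ((k + 1 : ℕ) : ZMod N) = ((k : ℕ) : ZMod N) + 1 := by push_cast; ring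
      rw [e, ← add_assoc]
      exact harr
  · intro k hk1 hk2
    simp only [if_neg (by omega : ¬ k + 1 = 0)]
    rw [dtau_pos]
    by_cases hk : k = 1
    · subst hk
      simp only [show (1:ℕ) - 1 = 0 from rfl, if_pos rfl]
      intro heq
      rw [Prod.mk.injEq] at heq
      exact DLab.noConfusion heq.2
    · simp only [if_neg (by omega : ¬ k - 1 = 0)]
      intro heq
      rw [Prod.mk.injEq] at heq
      injection heq.2 with h'
      omega
  · rintro ⟨k, hk1, hk2, r, (⟨h1', h2'⟩ | ⟨h1', h2'⟩)⟩ <;>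
    · simp only [if_neg (by omega : ¬ k + 1 = 0)] at h1'
      rw [Prod.mk.injEq] at h1'
      exact DLab.noConfusion h1'.2

lemma rs_down {N m : ℕ} (hm : 1 ≤ m) {j : ℕ} (hj : 1 ≤ j) (hjm : j + m ≤ N - 2)
    (i : ZMod N) : RSPath N m (i, DLab.pos (j + m)) (i, DLab.pos j) := by
  refine ⟨fun t => (i, DLab.pos (j + m - t)), ⟨⟨?_, ?_⟩, ?_⟩, by simp, by simp⟩
  · intro t ht
    have harr := DArrow.down (N := N) (h := N) i (j + m - t) (by omega) (by omega)
    have e : j + m - t - 1 = j + m - (t + 1) := by omega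
    rw [e] at harr
    exact harr
  · intro k hk1 hk2
    rw [dtau_pos]
    intro heq
    rw [Prod.mk.injEq] at heq
    injection heq.2 with h'
    omega
  · rintro ⟨k, hk1, hk2, r, (⟨h1', h2'⟩ | ⟨h1', h2'⟩)⟩ <;>
    · rw [Prod.mk.injEq] at h1'
      exact DLab.noConfusion h1'.2

lemma rs_downZ {N m : ℕ} (hm : 1 ≤ m) (hmN : m + 2 ≤ N) (i : ZMod N) (c : Bool) :
    RSPath N m (i, DLab.pos m) (i, DLab.z c) := by
  refine ⟨fun t => if t = m then (i, DLab.z c) else (i, DLab.pos (m - t)),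
    ⟨⟨?_, ?_⟩, ?_⟩, by simp only [if_neg (by omega : ¬ (0:ℕ) = m), Nat.sub_zero], by simp⟩
  · intro t ht
    by_cases htm : t + 1 = m
    · simp only [if_neg (by omega : ¬ t = m), if_pos htm]
      have e : m - t = 1 := by omega
      rw [e]
      exact DArrow.toZ i c
    · simp only [if_neg (by omega : ¬ t = m), if_neg htm]
      have harr := DArrow.down (N := N) (h := N) i (m - t) (by omega) (by omega)
      have e : m - t - 1 = m - (t + 1) := by omega
      rw [e] at harr
      exact harr
  · intro k hk1 hk2
    have hkm1 : ¬ (k - 1 = m) := by omega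
    by_cases hkm : k + 1 = m
    · simp only [if_pos hkm, if_neg hkm1]
      obtain ⟨b', hb'⟩ := dtau_z (N := N) (c := N) i c
      rw [hb']
      intro heq
      rw [Prod.mk.injEq] at heq
      exact DLab.noConfusion heq.2
    · simp only [if_neg hkm, if_neg hkm1]
      rw [dtau_pos]
      intro heq
      rw [Prod.mk.injEq] at heq
      injection heq.2 with h'
      omega
  · rintro ⟨k, hk1, hk2, r, (⟨h1', h2'⟩ | ⟨h1', h2'⟩)⟩ <;>
    · simp only [if_neg (by omega : ¬ k - 1 = m)] at h2'
      rw [Prod.mk.injEq] at h2'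
      exact DLab.noConfusion h2'.2

lemma zmem {N m : ℕ} (i : ZMod N) (b : Bool) : (i, DLab.z b) ∈ VSet N m :=
  ⟨fun j h => by simp at h, fun j h => by simp at h⟩

lemma posmem {N m : ℕ} {j : ℕ} (i : ZMod N) (h1 : 1 ≤ j) (h2 : j ≤ N - 2)
    (h3 : m ∣ j) : (i, DLab.pos j) ∈ VSet N m := by
  constructor
  · intro j' hj'
    injection hj' with e
    omega
  · intro j' hj'
    injection hj' with e
    exact e ▸ h3

lemma rtg_symm {N m : ℕ} {x y : ZMod N × DLab} (hx : x ∈ VSet N m)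
    (h : Relation.ReflTransGen
      (fun a b => b ∈ VSet N m ∧ (RSPath N m a b ∨ RSPath N m b a)) x y) :
    Relation.ReflTransGen
      (fun a b => b ∈ VSet N m ∧ (RSPath N m a b ∨ RSPath N m b a)) y x := by
  induction h with
  | refl => exact .refl
  | @tail b c hxb hbc ih =>
      have hb : b ∈ VSet N m := by
        rcases hxb.cases_tail with h' | ⟨d, _, hdb⟩
        · rwa [h']
        · exact hdb.1
      exact Relation.ReflTransGen.head ⟨hb, hbc.2.symm⟩ ih

lemma conn {n m N : ℕ} (hn : 3 ≤ n) (hm : 1 ≤ m) (hN : N = n * m - m + 1) :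
    ∀ x ∈ VSet N m, ∀ y ∈ VSet N m,
      Relation.ReflTransGen
        (fun a b => b ∈ VSet N m ∧ (RSPath N m a b ∨ RSPath N m b a)) x y := by
  have h3m : 3 * m ≤ n * m := Nat.mul_le_mul_right m hn
  have hN3 : 3 ≤ N := by omega
  have hmN : m + 2 ≤ N := by omega
  haveI : NeZero N := ⟨by omega⟩
  set R := fun a b : ZMod N × DLab =>
    b ∈ VSet N m ∧ (RSPath N m a b ∨ RSPath N m b a) with hR
  have hzstep : ∀ (i : ZMod N) (b b' : Bool),
      Relation.ReflTransGen R (i, DLab.z b) (i + ((m : ℕ) : ZMod N), DLab.z b') := by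
    intro i b b'
    have s1 : R (i, DLab.z b) (i + ((m : ℕ) : ZMod N), DLab.pos m) :=
      ⟨posmem _ hm (by omega) dvd_rfl, Or.inl (rs_up hm hmN i b)⟩
    have s2 : R (i + ((m : ℕ) : ZMod N), DLab.pos m)
        (i + ((m : ℕ) : ZMod N), DLab.z b') :=
      ⟨zmem _ _, Or.inl (rs_downZ hm hmN _ b')⟩
    exact Relation.ReflTransGen.head s1 (Relation.ReflTransGen.single s2)
  have hiter : ∀ (t : ℕ) (i : ZMod N) (b : Bool),
      Relation.ReflTransGen R (i, DLab.z b)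
        (i + (((t + 1) * m : ℕ) : ZMod N), DLab.z false) := by
    intro t
    induction t with
    | zero => intro i b; simpa using hzstep i b false
    | succ t ih =>
        intro i b
        have h1 := hzstep i b false
        have h2 := ih (i + ((m : ℕ) : ZMod N)) false
        have e : (i + ((m : ℕ) : ZMod N)) + (((t + 1) * m : ℕ) : ZMod N)
            = i + (((t + 1 + 1) * m : ℕ) : ZMod N) := by
          push_cast; ring
        rw [e] at h2
        exact h1.trans h2
  have hz2z : ∀ (i : ZMod N) (b : Bool) (c : ZMod N),
      Relation.ReflTransGen R (i, DLab.z b) (c, DLab.z false) := by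
    intro i b c
    have e1 : (n - 1) * m = n * m - m := by
      rw [Nat.sub_mul, one_mul]
    have e2 : N = 1 + m * (n - 1) := by
      rw [hN, ← e1, mul_comm]; ring
    have hcop : Nat.Coprime m N := by
      rw [e2]
      exact (Nat.coprime_add_mul_left_right m 1 (n - 1)).mpr (Nat.coprime_one_right m)
    set u := ZMod.unitOfCoprime m hcop with hu
    set w : ZMod N := (c - i) * ((u⁻¹ : (ZMod N)ˣ) : ZMod N) with hw
    set t := (w - 1).val with ht
    have hcast : ((t : ℕ) : ZMod N) = w - 1 := ZMod.natCast_rightInverse (w - 1)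
    have hum : ((u⁻¹ : (ZMod N)ˣ) : ZMod N) * ((m : ℕ) : ZMod N) = 1 := by
      rw [← ZMod.coe_unitOfCoprime m hcop]
      exact u.inv_mul
    have key : i + (((t + 1) * m : ℕ) : ZMod N) = c := by
      push_cast [hcast]
      rw [sub_add_cancel, hw, mul_assoc, hum, mul_one]
      ring
    have := hiter t i b
    rwa [key] at this
  have hdesc : ∀ (k : ℕ) (i : ZMod N), 1 ≤ k → k * m ≤ N - 2 →
      Relation.ReflTransGen R (i, DLab.pos (k * m)) (i, DLab.z false) := by
    intro k
    induction k with
    | zero => intro i h1 h2; omega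
    | succ k ih =>
        intro i h1 h2
        rcases Nat.eq_zero_or_pos k with rfl | hk
        · refine Relation.ReflTransGen.single ⟨zmem _ _, Or.inl ?_⟩
          have := rs_downZ hm hmN i false
          simpa using this
        · have e : (k + 1) * m = k * m + m := by ring
          have hkm1 : 1 ≤ k * m := by
            have := Nat.mul_le_mul hk hm
            omega
          have hkm2 : k * m + m ≤ N - 2 := by rw [← e]; exact h2
          have hstep : R (i, DLab.pos ((k + 1) * m)) (i, DLab.pos (k * m)) := by
            refine ⟨posmem _ hkm1 (by omega) (dvd_mul_left m k), Or.inl ?_⟩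
            rw [e]
            exact rs_down hm hkm1 hkm2 i
          exact Relation.ReflTransGen.head hstep (ih i hk (by omega))
  have hto : ∀ v ∈ VSet N m, Relation.ReflTransGen R v ((0 : ZMod N), DLab.z false) := by
    rintro ⟨i, l⟩ hv
    cases l with
    | z b => exact hz2z i b 0
    | pos j =>
        obtain ⟨k, hk⟩ := hv.2 j rfl
        have hb := hv.1 j rfl
        have hkne : k ≠ 0 := by
          rintro rfl
          rw [Nat.mul_zero] at hk
          omega
        have hjkm : j = k * m := by rw [hk, mul_comm]
        subst hjkm
        have h1 := hdesc k i (by omega) (by omega)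
        exact h1.trans (hz2z i false 0)
  intro x hx y hy
  exact (hto x hx).trans (rtg_symm hy (hto y hy))

end VCC

/-- For `n ≥ 3`, `m ≥ 1` and `N = n*m−m+1`, the set `V` is a
connected component of `μ_m(Γ(D_N,1))`: it is closed under arrows of
`μ_m(Γ(D_N,1))` in both directions, and any two vertices of `V` are joined by
a finite sequence of vertices of `V` in which consecutive vertices are joined
by an arrow of `μ_m(Γ(D_N,1))` in some direction. -/
theorem V_is_connected_component (n m N : ℕ) (hn : 3 ≤ n) (hm : 1 ≤ m)
    (hN : N = n * m - m + 1) :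
    (∀ x ∈ VSet N m, ∀ y, (RSPath N m x y ∨ RSPath N m y x) → y ∈ VSet N m) ∧
      ∀ x ∈ VSet N m, ∀ y ∈ VSet N m,
        Relation.ReflTransGen
          (fun a b => b ∈ VSet N m ∧ (RSPath N m a b ∨ RSPath N m b a)) x y := by
  have h3m : 3 * m ≤ n * m := Nat.mul_le_mul_right m hn
  have hN3 : 3 ≤ N := by omega
  constructor
  · rintro x hx y (h | h)
    · exact VCC.closure_fwd hm hN3 hx h
    · exact VCC.closure_bwd hm hN3 hx h
  · exact VCC.conn hn hm hN
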